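/- Let n ≥ 1 be an integer and τ ∈ ℂ with Im τ > 0, and define operators S and T on functions f : ℂ → ℂ by (Sf)(z) = e^{πi(n−1)/n} f(z + 1/n) and (Tf)(z) = e^{πiτ/n − 2πiz} f(z − τ/n). Then: (1) if f ∈ V^e_n then Sf ∈ V^e_n and Tf ∈ V^e_n; (2) Sⁿf = f and Tⁿf = f for every f ∈ V^e_n; (3) T(Sf) = e^{2πi/n} S(Tf) for every function f : ℂ → ℂ. -/
import Mathlib


open Complex

/-- Membership in `V^e_n`: entire functions with the two quasi-periodicity
properties `f(z+1) = (−1)^{n−1} f(z)` and `f(z+τ) = e^{−πinτ−2πinz} f(z)`. -/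
def MemVe (n : ℕ) (τ : ℂ) (f : ℂ → ℂ) : Prop :=
  Differentiable ℂ f ∧
  (∀ z : ℂ, f (z + 1) = (-1) ^ (n - 1) * f z) ∧
  (∀ z : ℂ, f (z + τ) =
    Complex.exp (-(Real.pi : ℂ) * Complex.I * (n : ℂ) * τ -
      2 * (Real.pi : ℂ) * Complex.I * (n : ℂ) * z) * f z)

/-- The operator `S`: `(Sf)(z) = e^{πi(n−1)/n} f(z + 1/n)`. -/
noncomputable def opS (n : ℕ) (f : ℂ → ℂ) : ℂ → ℂ := fun z =>
  Complex.exp ((Real.pi : ℂ) * Complex.I * ((n : ℂ) - 1) / (n : ℂ)) * f (z + 1 / (n : ℂ))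

/-- The operator `T`: `(Tf)(z) = e^{πiτ/n − 2πiz} f(z − τ/n)`. -/
noncomputable def opT (n : ℕ) (τ : ℂ) (f : ℂ → ℂ) : ℂ → ℂ := fun z =>
  Complex.exp ((Real.pi : ℂ) * Complex.I * τ / (n : ℂ) -
    2 * (Real.pi : ℂ) * Complex.I * z) * f (z - τ / (n : ℂ))

/-- The operators `S` and `T` preserve `V^e_n`, satisfy `Sⁿ = Tⁿ = 1` on `V^e_n`,
and satisfy the commutation relation `TS = e^{2πi/n} ST`. -/
theorem opS_opT_properties (n : ℕ) (hn : 1 ≤ n) (τ : ℂ) (hτ : 0 < τ.im) :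
    (∀ f : ℂ → ℂ, MemVe n τ f → MemVe n τ (opS n f) ∧ MemVe n τ (opT n τ f)) ∧
    (∀ f : ℂ → ℂ, MemVe n τ f → (opS n)^[n] f = f ∧ (opT n τ)^[n] f = f) ∧
    (∀ f : ℂ → ℂ, opT n τ (opS n f) =
      fun z => Complex.exp (2 * (Real.pi : ℂ) * Complex.I / (n : ℂ)) *
        opS n (opT n τ f) z) := by
  have hn0 : (n : ℂ) ≠ 0 := Nat.cast_ne_zero.mpr (by omega)
  refine ⟨?_, ?_, ?_⟩
  · rintro f ⟨hd, h1, h2⟩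
    constructor
    · refine ⟨?_, ?_, ?_⟩
      · exact (hd.comp (differentiable_id.add_const _)).const_mul _
      · intro z
        simp only [opS]
        rw [show z + 1 + 1/(n:ℂ) = (z + 1/(n:ℂ)) + 1 by ring, h1]
        ring
      · intro z
        simp only [opS]
        rw [show z + τ + 1/(n:ℂ) = (z + 1/(n:ℂ)) + τ by ring, h2]
        rw [show (-(Real.pi:ℂ) * Complex.I * n * τ -
            2*(Real.pi:ℂ)*Complex.I*n*(z+1/(n:ℂ)))
            = (-(Real.pi:ℂ)*Complex.I*n*τ - 2*(Real.pi:ℂ)*Complex.I*n*z)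
              + (-(2*(Real.pi:ℂ)*Complex.I)) by field_simp; ring]
        rw [Complex.exp_add, Complex.exp_neg, Complex.exp_two_pi_mul_I]
        ring
    · refine ⟨?_, ?_, ?_⟩
      · exact (((differentiable_const _).sub
          ((differentiable_const _).mul differentiable_id)).cexp).mul
          (hd.comp (differentiable_id.sub_const _))
      · intro z
        simp only [opT]
        rw [show z + 1 - τ/(n:ℂ) = (z - τ/(n:ℂ)) + 1 by ring, h1]
        rw [show ((Real.pi:ℂ)*Complex.I*τ/(n:ℂ) - 2*(Real.pi:ℂ)*Complex.I*(z+1))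
            = ((Real.pi:ℂ)*Complex.I*τ/(n:ℂ) - 2*(Real.pi:ℂ)*Complex.I*z)
              + (-(2*(Real.pi:ℂ)*Complex.I)) by ring]
        rw [Complex.exp_add, Complex.exp_neg, Complex.exp_two_pi_mul_I]
        ring
      · intro z
        simp only [opT]
        rw [show z + τ - τ/(n:ℂ) = (z - τ/(n:ℂ)) + τ by ring, h2]
        rw [← mul_assoc, ← Complex.exp_add, ← mul_assoc, ← Complex.exp_add]
        congr 2
        field_simp
        ring
  · rintro f ⟨hd, h1, h2⟩
    have hSk : ∀ (k : ℕ) (g : ℂ → ℂ), (opS n)^[k] g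
        = fun z => Complex.exp ((k:ℂ) * ((Real.pi:ℂ)*Complex.I*((n:ℂ)-1)/(n:ℂ)))
          * g (z + (k:ℂ)/(n:ℂ)) := by
      intro k
      induction k with
      | zero => intro g; simp
      | succ k ih =>
        intro g
        rw [Function.iterate_succ_apply', ih]
        funext z
        simp only [opS]
        rw [← mul_assoc, ← Complex.exp_add]
        congr 2
        · push_cast; field_simp; ring
        · push_cast; field_simp; ring
    have hTk : ∀ (k : ℕ) (g : ℂ → ℂ), (opT n τ)^[k] g
        = fun z => Complex.exp ((k:ℂ)^2 * ((Real.pi:ℂ)*Complex.I*τ/(n:ℂ))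
            - 2*(Real.pi:ℂ)*Complex.I*(k:ℂ)*z)
          * g (z - (k:ℂ)*τ/(n:ℂ)) := by
      intro k
      induction k with
      | zero => intro g; simp
      | succ k ih =>
        intro g
        rw [Function.iterate_succ_apply', ih]
        funext z
        simp only [opT]
        rw [← mul_assoc, ← Complex.exp_add]
        congr 2
        · push_cast; field_simp; ring
        · push_cast; field_simp; ring
    constructor
    · rw [hSk n f]
      funext z
      have e1 : (n:ℂ) * ((Real.pi:ℂ)*Complex.I*((n:ℂ)-1)/(n:ℂ))
          = ((n-1:ℕ):ℂ) * ((Real.pi:ℂ)*Complex.I) := by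
        rw [Nat.cast_sub hn]
        push_cast
        field_simp
      rw [e1, Complex.exp_nat_mul, Complex.exp_pi_mul_I,
        show z + (n:ℂ)/(n:ℂ) = z + 1 by rw [div_self hn0], h1, ← mul_assoc,
        ← pow_add]
      have : Even ((n-1) + (n-1)) := ⟨n-1, rfl⟩
      rw [this.neg_one_pow, one_mul]
    · rw [hTk n f]
      funext z
      have h := h2 (z - τ)
      rw [sub_add_cancel] at h
      rw [show z - (n:ℂ)*τ/(n:ℂ) = z - τ by field_simp, h]
      congr 1
      congr 1
      field_simp
      ring
  · intro f
    funext z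
    simp only [opT, opS, ← mul_assoc, ← Complex.exp_add]
    rw [show z - τ/(n:ℂ) + 1/(n:ℂ) = z + 1/(n:ℂ) - τ/(n:ℂ) by ring]
    congr 2
    field_simp
    ring
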